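/- Every prime p with p ≡ 5 (mod 8) admits a representation p = (4r+2)^2 + (4s+1)^2 with integers r, s satisfying r ≡ s (mod 2); consequently 2p = (8k+3)^2 + (8l+1)^2 where k = (r+s)/2 and l = (r-s)/2. -/
import Mathlib

lemma aux_rep (P a b : ℤ) (h : P = a^2 + b^2) (ha : a % 4 = 2) (hb : b % 2 = 1) :
    ∃ r s : ℤ, P = (4*r + 2)^2 + (4*s + 1)^2 ∧ r % 2 = s % 2 := by
  obtain ⟨s, hs⟩ : ∃ s : ℤ, b = 4*s+1 ∨ b = -(4*s+1) := by
    refine ⟨if b % 4 = 1 then (b-1)/4 else (-b-1)/4, ?_⟩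
    split_ifs <;> omega
  set r0 : ℤ := (a - 2)/4 with hr0
  refine ⟨if r0 % 2 = s % 2 then r0 else -r0 - 1, s, ?_, ?_⟩
  · have h1 : 4*r0 + 2 = a := by omega
    have hb2 : b^2 = (4*s+1)^2 := by rcases hs with h' | h' <;> rw [h'] <;> ring
    split_ifs with hc
    · rw [h, h1, hb2]
    · have : 4*(-r0-1) + 2 = -a := by omega
      rw [h, this, hb2]; ring
  · split_ifs with hc
    · exact hc
    · omega

theorem prime_five_mod_eight_special_representation (p : ℕ) (hp : p.Prime)
    (hp8 : p % 8 = 5) :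
    ∃ r s : ℤ, (p : ℤ) = (4*r + 2)^2 + (4*s + 1)^2 ∧ (r ≡ s [ZMOD 2]) ∧
      ∃ k l : ℤ, r + s = 2*k ∧ r - s = 2*l ∧
        2 * (p : ℤ) = (8*k + 3)^2 + (8*l + 1)^2 := by
  haveI := Fact.mk hp
  obtain ⟨a, b, hab⟩ := Nat.Prime.sq_add_sq (p := p) (by omega)
  have key : (a % 4 = 2 ∧ b % 2 = 1) ∨ (b % 4 = 2 ∧ a % 2 = 1) := by
    have ha := Nat.pow_mod a 2 8
    have hbm := Nat.pow_mod b 2 8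
    have h8 : (a^2 + b^2) % 8 = 5 := by rw [hab]; exact hp8
    have h1 : a % 8 < 8 := Nat.mod_lt _ (by norm_num)
    have h2 : b % 8 < 8 := Nat.mod_lt _ (by norm_num)
    set A := a % 8 with hA
    set B := b % 8 with hB
    interval_cases A <;> interval_cases B <;> norm_num at ha hbm <;> omega
  have habz : (p : ℤ) = (a : ℤ)^2 + (b : ℤ)^2 := by
    rw [← hab]; push_cast; ring
  have main : ∃ r s : ℤ, (p : ℤ) = (4*r + 2)^2 + (4*s + 1)^2 ∧ r % 2 = s % 2 := by
    rcases key with ⟨h1, h2⟩ | ⟨h1, h2⟩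
    · exact aux_rep _ _ _ habz (by omega) (by omega)
    · exact aux_rep _ (b : ℤ) (a : ℤ) (by rw [habz]; ring) (by omega) (by omega)
  obtain ⟨r, s, hrs, hpar⟩ := main
  obtain ⟨k, hk⟩ : ∃ k, r + s = 2*k := ⟨(r+s)/2, by omega⟩
  obtain ⟨l, hl⟩ : ∃ l, r - s = 2*l := ⟨(r-s)/2, by omega⟩
  refine ⟨r, s, hrs, hpar, k, l, hk, hl, ?_⟩
  rw [hrs]
  linear_combination (4*(4*r+4*s+8*k+6))*hk + (4*(4*r-4*s+8*l+2))*hl
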